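/- Let (S̃_j)_{j≥0} be a zero-delayed random walk with i.i.d. nonnegative increments (S̃_0 = 0, S̃_j = sum of the first j increments), let K(t) = P(S̃_1 ≤ t), and let a > 0. Define f(t) := a·t − ∫₀^{at}(1 − K(y)) dy for t ≥ 0 and f(t) = 0 for t < 0 (equivalently, f(t) = ∫₀^{at} K(y) dy = E[(a·t − S̃_1)₊]). Then for every j ∈ ℕ and t ≥ 0, the j-fold Lebesgue–Stieltjes convolution power satisfies f^{∗(j)}(t) = E[((a·t − S̃_j)₊)^j]/j!. -/

import Mathlib

open MeasureTheory Filter Set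
open scoped ENNReal NNReal Topology

noncomputable section

/-- `j`-fold convolution power of a measure on `ℝ` (Dirac mass at `0` for `j = 0`). -/
def convPow (μ : Measure ℝ) : ℕ → Measure ℝ
  | 0 => Measure.dirac 0
  | n + 1 => Measure.map (fun p : ℝ × ℝ => p.1 + p.2) ((convPow μ n).prod μ)

open Classical in
/-- The Lebesgue–Stieltjes measure of a monotone function (junk value `0` otherwise). -/
def lsMeasure (f : ℝ → ℝ) : Measure ℝ :=
  if hf : Monotone f then hf.stieltjesFunction.measure else 0

/-- The `j`-fold Lebesgue–Stieltjes convolution power `f^{∗(j)}(t)` of a nondecreasing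
right-continuous function `f` vanishing on the negative half-line. -/
def convPowFun (f : ℝ → ℝ) (j : ℕ) (t : ℝ) : ℝ :=
  ((convPow (lsMeasure f) j) (Iic t)).toReal

variable {Ω : Type*} [MeasureSpace Ω]

open ProbabilityTheory
open scoped ProbabilityTheory

/-- Partial sums `S̃ n = X 0 + ⋯ + X (n-1)` of the increments. -/
def pSum (X : ℕ → Ω → ℝ) (n : ℕ) (ω : Ω) : ℝ := ∑ i ∈ Finset.range n, X i ω

/-!
Let `ρ` be the law of `S̃₁` and `λ` Lebesgue measure on `[0, ∞)`. By Fubini,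
`(λ ∗ ρ)(-∞, c] = ∫_{-∞}^c ρ(-∞, y] dy`, which for `c = a t` is exactly `f t` because `ρ` lives on
`[0, ∞)`. Hence the Stieltjes measure of `f` is the image of `λ ∗ ρ` under `x ↦ x / a`, and its
`j`-th convolution power is the image of `ρ^{∗j} ∗ λ^{∗j}`. Here `ρ^{∗j}` is the law of `S̃_j` by
independence, and `λ^{∗j}(-∞, x] = x₊^j / j!`, so evaluating at `(-∞, a t]` gives
`E[(a t - S̃_j)₊^j] / j!`.
-/

namespace MeasureTheory.Measure

lemma conv_apply_Iic (μ ν : Measure ℝ) [SFinite ν] (c : ℝ) :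
    (μ ∗ ν) (Iic c) = ∫⁻ x, ν (Iic (c - x)) ∂μ := by
  rw [conv, map_apply (by fun_prop) measurableSet_Iic,
    prod_apply ((by fun_prop : Measurable fun p : ℝ × ℝ => p.1 + p.2) measurableSet_Iic)]
  congr! 3 with x
  ext y
  simp [le_sub_iff_add_le']

end MeasureTheory.Measure

lemma setLIntegral_Ici_comp_sub_left (g : ℝ → ℝ≥0∞) (c : ℝ) :
    ∫⁻ x in Ici 0, g (c - x) = ∫⁻ y in Iic c, g y := by
  rw [← lintegral_indicator measurableSet_Ici, ← lintegral_indicator measurableSet_Iic,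
    ← lintegral_sub_left_eq_self _ c]
  refine lintegral_congr fun x => ?_
  simp [indicator]

lemma volume_Ici_conv_apply_Iic (ν : Measure ℝ) [SFinite ν] (c : ℝ) :
    (volume.restrict (Ici 0) ∗ ν) (Iic c) = ∫⁻ y in Iic c, ν (Iic y) := by
  rw [Measure.conv_apply_Iic, setLIntegral_Ici_comp_sub_left (fun y => ν (Iic y))]

lemma convPow_succ (μ : Measure ℝ) (n : ℕ) : convPow μ (n + 1) = convPow μ n ∗ μ := rfl

instance (μ : Measure ℝ) [SFinite μ] (n : ℕ) : SFinite (convPow μ n) := by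
  induction n with
  | zero => exact inferInstanceAs (SFinite (Measure.dirac 0))
  | succ n _ => rw [convPow_succ]; infer_instance

lemma convPow_one (μ : Measure ℝ) [SFinite μ] : convPow μ 1 = μ := by
  rw [convPow_succ, convPow, Measure.dirac_zero_conv]

lemma convPow_conv (μ ν : Measure ℝ) [SFinite μ] [SFinite ν] (n : ℕ) :
    convPow (μ ∗ ν) n = convPow μ n ∗ convPow ν n := by
  induction n with
  | zero => simp [convPow]
  | succ n ih =>
    rw [convPow_succ, convPow_succ, convPow_succ, ih, Measure.conv_assoc,
      ← Measure.conv_assoc (convPow ν n), Measure.conv_comm (convPow ν n) μ, Measure.conv_assoc μ,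
      ← Measure.conv_assoc]

lemma convPow_map (μ : Measure ℝ) [SFinite μ] (L : ℝ →+ ℝ) (hL : Measurable L) (n : ℕ) :
    convPow (μ.map L) n = (convPow μ n).map L := by
  induction n with
  | zero => simp [convPow, Measure.map_dirac' hL]
  | succ n ih => rw [convPow_succ, convPow_succ, ih, Measure.map_conv_addMonoidHom L hL]

lemma setLIntegral_Iic_ofReal_eq_ofReal_intervalIntegral {g : ℝ → ℝ} (hg : ∀ y, 0 ≤ g y)
    (hg_neg : ∀ y < 0, g y = 0) {c : ℝ} (hint : IntervalIntegrable g volume 0 c) :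
    ∫⁻ y in Iic c, ENNReal.ofReal (g y) = ENNReal.ofReal (∫ y in 0..c, g y) := by
  have h_Iio : ∫⁻ y in Iio 0, ENNReal.ofReal (g y) = 0 :=
    setLIntegral_eq_zero measurableSet_Iio fun y hy => by simp [hg_neg y hy]
  rcases lt_or_ge c 0 with hc | hc
  · rw [ENNReal.ofReal_of_nonpos, ← nonpos_iff_eq_zero, ← h_Iio]
    · exact lintegral_mono_set (Iic_subset_Iio.2 hc)
    · rw [intervalIntegral.integral_symm, neg_nonpos]
      exact intervalIntegral.integral_nonneg hc.le fun y _ => hg y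
  · rw [← Iio_union_Icc_eq_Iic hc, lintegral_union measurableSet_Icc
      (Iio_disjoint_Ici le_rfl |>.mono_right Icc_subset_Ici_self), h_Iio, zero_add,
      intervalIntegral.integral_of_le hc, ← setLIntegral_congr Ioc_ae_eq_Icc,
      ofReal_integral_eq_lintegral_ofReal
        ((intervalIntegrable_iff_integrableOn_Ioc_of_le hc).1 hint) (Eventually.of_forall hg)]

lemma intervalIntegral_max_zero_pow_succ (n : ℕ) (c : ℝ) :
    ∫ y in 0..c, max y 0 ^ (n + 1) = max c 0 ^ (n + 2) / (n + 2) := by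
  rcases lt_or_ge c 0 with hc | hc
  · rw [max_eq_right hc.le, intervalIntegral.integral_congr (g := fun _ => 0)]
    · simp
    · intro y hy
      rw [uIcc_of_ge hc.le] at hy
      simp [max_eq_right hy.2]
  · rw [max_eq_left hc, intervalIntegral.integral_congr (g := fun y => y ^ (n + 1)), integral_pow]
    · push_cast
      ring
    · intro y hy
      rw [uIcc_of_le hc] at hy
      simp [max_eq_left hy.1]

lemma convPow_volume_Ici_apply_Iic (n : ℕ) (c : ℝ) :
    convPow (volume.restrict (Ici 0)) (n + 1) (Iic c) =
      ENNReal.ofReal (max c 0 ^ (n + 1) / (n + 1).factorial) := by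
  induction n generalizing c with
  | zero =>
    rw [convPow_one, Measure.restrict_apply measurableSet_Iic, Iic_inter_Ici, Real.volume_Icc]
    simp
  | succ n ih =>
    have hcont : Continuous fun y : ℝ => max y 0 ^ (n + 1) / (n + 1).factorial := by fun_prop
    rw [convPow_succ, Measure.conv_comm, volume_Ici_conv_apply_Iic,
      setLIntegral_congr_fun measurableSet_Iic fun y _ => ih y,
      setLIntegral_Iic_ofReal_eq_ofReal_intervalIntegral (fun y => by positivity)
        (fun y hy => by simp [max_eq_right hy.le]) (hcont.intervalIntegrable _ _),
      intervalIntegral.integral_div, intervalIntegral_max_zero_pow_succ, Nat.factorial_succ (n + 1)]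
    congr 1
    push_cast
    field_simp
    ring

lemma monotone_measureReal_Iic {ν : Measure ℝ} (hν : ∀ x, ν (Iic x) ≠ ∞) :
    Monotone fun x => ν.real (Iic x) :=
  fun _ y hxy => measureReal_mono (Iic_subset_Iic.2 hxy) (hν y)

lemma lsMeasure_measureReal_Iic (ν : Measure ℝ) (hν : ∀ x, ν (Iic x) ≠ ∞) :
    lsMeasure (fun x => ν.real (Iic x)) = ν := by
  have hright (x : ℝ) : Function.rightLim (fun y => ν.real (Iic y)) x = ν.real (Iic x) := by
    have hIic : ⋂ r > x, Iic r = Iic x := by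
      ext y
      simp only [mem_iInter, mem_Iic]
      exact ⟨fun h => le_of_forall_gt_imp_ge_of_dense h, fun h r hr => h.trans hr.le⟩
    have h := tendsto_measure_biInter_gt (μ := ν) (s := Iic) (a := x)
      (fun _ _ => nullMeasurableSet_Iic) (fun _ _ _ hij => Iic_subset_Iic.2 hij)
      ⟨x + 1, by linarith, hν _⟩
    rw [hIic] at h
    exact rightLim_eq_of_tendsto ((ENNReal.tendsto_toReal (hν x)).comp h)
  rw [lsMeasure, dif_pos (monotone_measureReal_Iic hν)]
  refine Measure.ext_of_Ioc' _ _ (fun a b _ => by simp [StieltjesFunction.measure_Ioc])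
    fun a b hab => ?_
  rw [StieltjesFunction.measure_Ioc, Monotone.stieltjesFunction_eq,
    Monotone.stieltjesFunction_eq, hright, hright, ← Iic_sdiff_Iic,
    measure_sdiff (Iic_subset_Iic.2 hab.le) nullMeasurableSet_Iic (hν a),
    ENNReal.ofReal_sub _ measureReal_nonneg, ofReal_measureReal (hν b), ofReal_measureReal (hν a)]

lemma volume_Ici_conv_apply_Iic_eq_ofReal_integral (ρ : Measure ℝ) [IsFiniteMeasure ρ]
    (hρ : ρ (Iio 0) = 0) (c : ℝ) :
    (volume.restrict (Ici 0) ∗ ρ) (Iic c) = ENNReal.ofReal (∫ y in 0..c, ρ.real (Iic y)) := by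
  rw [volume_Ici_conv_apply_Iic, setLIntegral_congr_fun measurableSet_Iic
    fun y _ => (ofReal_measureReal (measure_ne_top ρ _)).symm]
  exact setLIntegral_Iic_ofReal_eq_ofReal_intervalIntegral (fun _ => measureReal_nonneg)
    (fun y hy => (measureReal_eq_zero_iff).2 (measure_mono_null (Iic_subset_Iio.2 hy) hρ))
    (monotone_measureReal_Iic fun _ => measure_ne_top ρ _).intervalIntegrable

lemma volume_Ici_conv_real_Iic (ρ : Measure ℝ) [IsFiniteMeasure ρ] (hρ : ρ (Iio 0) = 0)
    (c : ℝ) :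
    (volume.restrict (Ici 0) ∗ ρ).real (Iic c) =
      if c < 0 then 0 else c - ∫ y in 0..c, (1 - ρ.real (Iic y)) := by
  have hint : IntervalIntegrable (fun y => ρ.real (Iic y)) volume 0 c :=
    (monotone_measureReal_Iic fun _ => measure_ne_top ρ _).intervalIntegrable
  rw [measureReal_def, volume_Ici_conv_apply_Iic_eq_ofReal_integral ρ hρ, ENNReal.toReal_ofReal']
  split_ifs with hc
  · refine max_eq_right ?_
    rw [intervalIntegral.integral_symm, neg_nonpos]
    exact intervalIntegral.integral_nonneg hc.le fun _ _ => measureReal_nonneg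
  · rw [intervalIntegral.integral_sub intervalIntegrable_const hint,
      intervalIntegral.integral_const, smul_eq_mul, mul_one, sub_zero, sub_sub_cancel, max_eq_left]
    exact intervalIntegral.integral_nonneg (not_lt.1 hc) fun _ _ => measureReal_nonneg

lemma preimage_mulLeft_inv_Iic {a : ℝ} (ha : 0 < a) (s : ℝ) :
    AddMonoidHom.mulLeft a⁻¹ ⁻¹' Iic s = Iic (a * s) := by
  ext x
  simp [inv_mul_le_iff₀ ha]

lemma lsMeasure_eq_map_volume_Ici_conv (ρ : Measure ℝ) [IsFiniteMeasure ρ] (hρ : ρ (Iio 0) = 0)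
    {a : ℝ} (ha : 0 < a) {f : ℝ → ℝ}
    (hf : ∀ t, f t = if t < 0 then 0 else a * t - ∫ y in 0..a * t, (1 - ρ.real (Iic y))) :
    lsMeasure f = (volume.restrict (Ici 0) ∗ ρ).map (AddMonoidHom.mulLeft a⁻¹) := by
  have hL : Measurable (AddMonoidHom.mulLeft a⁻¹) := measurable_const_mul a⁻¹
  have hf_cdf : f = fun t => ((volume.restrict (Ici 0) ∗ ρ).map (AddMonoidHom.mulLeft a⁻¹)).real
      (Iic t) := by
    funext t
    have hat : a * t < 0 ↔ t < 0 := smul_neg_iff_of_pos_left ha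
    rw [hf t, map_measureReal_apply hL measurableSet_Iic, preimage_mulLeft_inv_Iic ha,
      volume_Ici_conv_real_Iic ρ hρ]
    simp only [hat]
  rw [hf_cdf]
  refine lsMeasure_measureReal_Iic _ fun s => ?_
  rw [Measure.map_apply hL measurableSet_Iic, preimage_mulLeft_inv_Iic ha,
    volume_Ici_conv_apply_Iic_eq_ofReal_integral ρ hρ]
  exact ENNReal.ofReal_ne_top

@[fun_prop]
lemma measurable_pSum {Ω : Type*} [MeasurableSpace Ω] {X : ℕ → Ω → ℝ}
    (hmeas : ∀ k, Measurable (X k)) (n : ℕ) :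
    Measurable (pSum X n) :=
  Finset.measurable_sum _ fun i _ => hmeas i

lemma pSum_one {Ω : Type*} (X : ℕ → Ω → ℝ) : pSum X 1 = X 0 := by
  funext ω
  simp [pSum]

lemma map_pSum_eq_convPow {Ω : Type*} [MeasurableSpace Ω] {μ : Measure Ω}
    [IsProbabilityMeasure μ] (X : ℕ → Ω → ℝ) (hmeas : ∀ k, Measurable (X k))
    (hiid : iIndepFun X μ) (hid : ∀ k, IdentDistrib (X k) (X 0) μ μ) (n : ℕ) :
    μ.map (pSum X n) = convPow (μ.map (X 0)) n := by
  have hsum (n : ℕ) : pSum X n = ∑ i ∈ Finset.range n, X i := by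
    funext ω
    simp [pSum]
  induction n with
  | zero => simp [hsum, convPow, Pi.zero_def, Measure.map_const]
  | succ n ih =>
    have hind : IndepFun (pSum X n) (X n) μ := hsum n ▸ hiid.indepFun_sum_range_succ hmeas n
    rw [hsum, Finset.sum_range_succ, ← hsum, hind.map_add_eq_map_conv_map
      (measurable_pSum hmeas n) (hmeas n), ih, (hid n).map_eq, convPow_succ]

/-- **Proposition 3.6 (identity part).** For a zero-delayed random walk `S̃` with i.i.d.
nonnegative increments, `K(t) = P(S̃₁ ≤ t)`, `a > 0` and
`f(t) = a t - ∫₀^{at} (1 - K(y)) dy` for `t ≥ 0` (and `f(t) = 0` for `t < 0`),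
one has `f^{∗(j)}(t) = E[((a t - S̃_j)₊)^j] / j!` for all `j ∈ ℕ`, `j ≥ 1`, and `t ≥ 0`. -/
theorem convolution_powers_random_walk_identity
    [IsProbabilityMeasure (ℙ : Measure Ω)]
    (X : ℕ → Ω → ℝ)
    (hmeas : ∀ k, Measurable (X k))
    (hiid : iIndepFun X ℙ)
    (hid : ∀ k, IdentDistrib (X k) (X 0) ℙ ℙ)
    (hnonneg : ∀ k, ∀ᵐ ω ∂ℙ, 0 ≤ X k ω)
    (a : ℝ) (ha : 0 < a)
    (f : ℝ → ℝ)
    (hf : ∀ t : ℝ, f t =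
      if t < 0 then 0
      else a * t - ∫ y in (0 : ℝ)..(a * t), (1 - (ℙ {ω | pSum X 1 ω ≤ y}).toReal)) :
    ∀ j : ℕ, 1 ≤ j → ∀ t : ℝ, 0 ≤ t →
      convPowFun f j t =
        (∫ ω, (max (a * t - pSum X j ω) 0) ^ j ∂ℙ) / (Nat.factorial j : ℝ) := by
  intro j hj t _
  set ρ : Measure ℝ := (ℙ : Measure Ω).map (X 0)
  have : IsProbabilityMeasure ρ := Measure.isProbabilityMeasure_map (hmeas 0).aemeasurable
  have hρ : ρ (Iio 0) = 0 := by
    rw [Measure.map_apply (hmeas 0) measurableSet_Iio]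
    exact measure_mono_null (fun ω hω => not_le.2 hω) (ae_iff.1 (hnonneg 0))
  have hlaw : lsMeasure f = (volume.restrict (Ici 0) ∗ ρ).map (AddMonoidHom.mulLeft a⁻¹) := by
    refine lsMeasure_eq_map_volume_Ici_conv ρ hρ ha fun t => ?_
    simp only [hf t, pSum_one, ρ, map_measureReal_apply (hmeas 0) measurableSet_Iic]
    rfl
  have hL : Measurable (AddMonoidHom.mulLeft a⁻¹) := measurable_const_mul a⁻¹
  obtain ⟨n, rfl⟩ : ∃ n, j = n + 1 := ⟨j - 1, by omega⟩
  calc convPowFun f (n + 1) t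
      = (convPow ρ (n + 1) ∗ convPow (volume.restrict (Ici 0)) (n + 1)).real (Iic (a * t)) := by
        rw [convPowFun, ← measureReal_def, hlaw, convPow_map _ _ hL,
          map_measureReal_apply hL measurableSet_Iic,
          preimage_mulLeft_inv_Iic ha, convPow_conv, Measure.conv_comm]
    _ = (∫⁻ ω, ENNReal.ofReal (max (a * t - pSum X (n + 1) ω) 0 ^ (n + 1) / (n + 1).factorial)
          ∂ℙ).toReal := by
        simp only [measureReal_def, Measure.conv_apply_Iic, convPow_volume_Ici_apply_Iic]
        rw [← map_pSum_eq_convPow X hmeas hiid hid,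
          lintegral_map (by fun_prop) (measurable_pSum hmeas _)]
    _ = _ := by
        rw [← integral_div, integral_eq_lintegral_of_nonneg_ae
          (Eventually.of_forall fun ω => by positivity) (by fun_prop)]
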